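/- arXiv:2406.07460 — 2 statements merged into one kernel-verified Lean document; each statement's English description precedes it below -/
import Mathlib

section
/- For every real number N > 0 and all real numbers a > 0 and b > 0, one has |F_N(a) − F_N(b)| ≤ (1/N) · F_N(a) · F_N(b) · |a − b|. -/
/-- The cut-off function `F_N(r) = min {1, N/r}`. -/
noncomputable def FN (N r : ℝ) : ℝ := min 1 (N / r)

/-!
Writing `F_N(r) = N / max r N`, the difference `F_N(a) - F_N(b)` equals
`(1/N) F_N(a) F_N(b) (max b N - max a N)`, and `r ↦ max r N` is 1-Lipschitz.
-/

theorem FN_eq_div_max (N : ℝ) {r : ℝ} (hr : 0 < r) : FN N r = N / max r N := by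
  rcases le_total r N with hrN | hNr
  · rw [FN, max_eq_right hrN, min_eq_left ((one_le_div hr).mpr hrN), div_self (hr.trans_le hrN).ne']
  · rw [FN, max_eq_left hNr, min_eq_right ((div_le_one hr).mpr hNr)]

theorem abs_div_sub_div_eq_mul_abs_sub {N x y : ℝ} (hN : 0 ≤ N) (hx : 0 < x) (hy : 0 < y) :
    |N / x - N / y| = (1 / N) * (N / x) * (N / y) * |x - y| := by
  rcases hN.eq_or_lt with rfl | hN
  · simp
  have hxy : N / x - N / y = N / (x * y) * (y - x) := by field_simp
  rw [hxy, abs_mul, abs_of_pos (by positivity), abs_sub_comm]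
  field_simp

theorem cutoff_lipschitz (N a b : ℝ) (hN : 0 < N) (ha : 0 < a) (hb : 0 < b) :
    |FN N a - FN N b| ≤ (1 / N) * FN N a * FN N b * |a - b| := by
  have hma : 0 < max a N := lt_max_of_lt_left ha
  have hmb : 0 < max b N := lt_max_of_lt_left hb
  rw [FN_eq_div_max N ha, FN_eq_div_max N hb, abs_div_sub_div_eq_mul_abs_sub hN.le hma hmb]
  exact mul_le_mul_of_nonneg_left (abs_max_sub_max_le_abs a b N) (by positivity)
end

section
/- Let E be a real normed vector space, f : ℝ → E a measurable function such that t ↦ ‖f(t)‖² is integrable on every compact interval, and f_∞ ∈ E. Suppose f satisfies Assumption (F). Then for every κ > 0 and every τ ∈ ℝ there exists M > 0 such that for every s ≤ τ the function r ↦ e^{κ(r−s)} ‖f(r)‖² is integrable on (−∞, s] and ∫_{−∞}^{s} e^{κ(r−s)} ‖f(r)‖² dr ≤ M; that is, sup_{s ≤ τ} ∫_{−∞}^{s} e^{κ(r−s)} ‖f(r)‖² dr < +∞. -/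
/-! On `(-∞, s]` the weight `exp (κ (r - s))` lies in `(0, 1]` and has integral `κ⁻¹`, while
`‖f r‖² ≤ 2 ‖f r - f∞‖² + 2 ‖f∞‖²`. So the weighted integral is at most
`2 ∫_{-∞}^{τ} ‖f - f∞‖² + 2 ‖f∞‖² / κ`, uniformly in `s ≤ τ`. -/

open MeasureTheory Filter Real Set

section ExpWeight

variable {κ : ℝ}

lemma exp_mul_sub_eq (r s : ℝ) : exp (κ * (r - s)) = exp (κ * r) * exp (-(κ * s)) := by
  rw [← exp_add]; ring_nf

lemma integrableOn_exp_mul_sub_Iic (hκ : 0 < κ) (s : ℝ) :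
    IntegrableOn (fun r => exp (κ * (r - s))) (Iic s) := by
  simp_rw [exp_mul_sub_eq]
  exact (integrableOn_exp_mul_Iic hκ s).mul_const _

lemma integral_exp_mul_sub_Iic (hκ : 0 < κ) (s : ℝ) :
    ∫ r in Iic s, exp (κ * (r - s)) = κ⁻¹ := by
  simp_rw [exp_mul_sub_eq]
  rw [integral_mul_const, integral_exp_mul_Iic hκ, div_mul_eq_mul_div, ← exp_add, add_neg_cancel,
    exp_zero, one_div]

lemma exp_mul_sub_le_one (hκ : 0 ≤ κ) {r s : ℝ} (hrs : r ≤ s) : exp (κ * (r - s)) ≤ 1 :=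
  exp_le_one_iff.2 (mul_nonpos_of_nonneg_of_nonpos hκ (sub_nonpos.2 hrs))

end ExpWeight

section WeightedNormSq

variable {E : Type*} [SeminormedAddCommGroup E]

lemma mul_norm_sq_le {w : ℝ} (hw0 : 0 ≤ w) (hw1 : w ≤ 1) (x c : E) :
    w * ‖x‖ ^ 2 ≤ 2 * ‖x - c‖ ^ 2 + 2 * ‖c‖ ^ 2 * w := by
  have hx : ‖x‖ ^ 2 ≤ 2 * (‖x - c‖ ^ 2 + ‖c‖ ^ 2) :=
    (pow_le_pow_left₀ (norm_nonneg x) (norm_le_norm_sub_add x c) 2).trans add_sq_le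
  calc w * ‖x‖ ^ 2 ≤ w * (2 * (‖x - c‖ ^ 2 + ‖c‖ ^ 2)) := mul_le_mul_of_nonneg_left hx hw0
    _ ≤ 2 * ‖x - c‖ ^ 2 + 2 * ‖c‖ ^ 2 * w := by nlinarith [sq_nonneg ‖x - c‖]

variable {α : Type*} [MeasurableSpace α] {μ : Measure α} {f : α → E} {c : E} {w : α → ℝ}

lemma integrable_mul_norm_sq (hf : AEStronglyMeasurable f μ)
    (hfc : Integrable (fun x => ‖f x - c‖ ^ 2) μ) (hw : Integrable w μ)
    (hw0 : ∀ᵐ x ∂μ, 0 ≤ w x) (hw1 : ∀ᵐ x ∂μ, w x ≤ 1) :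
    Integrable (fun x => w x * ‖f x‖ ^ 2) μ := by
  refine Integrable.mono' ((hfc.const_mul 2).add (hw.const_mul (2 * ‖c‖ ^ 2)))
    (hw.aestronglyMeasurable.mul (hf.norm.pow 2)) ?_
  filter_upwards [hw0, hw1] with x h0 h1
  rw [norm_of_nonneg (by positivity)]
  exact mul_norm_sq_le h0 h1 (f x) c

lemma integral_mul_norm_sq_le (hf : AEStronglyMeasurable f μ)
    (hfc : Integrable (fun x => ‖f x - c‖ ^ 2) μ) (hw : Integrable w μ)
    (hw0 : ∀ᵐ x ∂μ, 0 ≤ w x) (hw1 : ∀ᵐ x ∂μ, w x ≤ 1) :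
    ∫ x, w x * ‖f x‖ ^ 2 ∂μ ≤ 2 * (∫ x, ‖f x - c‖ ^ 2 ∂μ) + 2 * ‖c‖ ^ 2 * ∫ x, w x ∂μ := by
  rw [← integral_const_mul, ← integral_const_mul,
    ← integral_add (hfc.const_mul 2) (hw.const_mul _)]
  refine integral_mono_ae (integrable_mul_norm_sq hf hfc hw hw0 hw1)
    ((hfc.const_mul 2).add (hw.const_mul _)) ?_
  filter_upwards [hw0, hw1] with x h0 h1
  exact mul_norm_sq_le h0 h1 (f x) c

end WeightedNormSq

theorem backward_uniform_integral_bound_general {E : Type*} [NormedAddCommGroup E]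
    (f : ℝ → E) (finf : E)
    (hmeas : AEStronglyMeasurable f volume)
    (hF1 : ∀ τ : ℝ, IntegrableOn (fun t => ‖f t - finf‖ ^ 2) (Set.Iic τ)) :
    ∀ κ : ℝ, 0 < κ → ∀ τ : ℝ, ∃ M : ℝ, 0 < M ∧ ∀ s ≤ τ,
      IntegrableOn (fun r => Real.exp (κ * (r - s)) * ‖f r‖ ^ 2) (Set.Iic s) ∧
      ∫ r in Set.Iic s, Real.exp (κ * (r - s)) * ‖f r‖ ^ 2 ≤ M := by
  intro κ hκ τ
  set I := ∫ t in Iic τ, ‖f t - finf‖ ^ 2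
  have hI : 0 ≤ I := setIntegral_nonneg measurableSet_Iic fun t _ => by positivity
  refine ⟨2 * I + 2 * ‖finf‖ ^ 2 * κ⁻¹ + 1, by positivity, fun s hs => ?_⟩
  have hFs := (hF1 τ).mono_set (Iic_subset_Iic.2 hs)
  have hw0 : ∀ᵐ r ∂volume.restrict (Iic s), 0 ≤ exp (κ * (r - s)) :=
    ae_of_all _ fun r => (exp_pos _).le
  have hw1 : ∀ᵐ r ∂volume.restrict (Iic s), exp (κ * (r - s)) ≤ 1 :=
    (ae_restrict_mem measurableSet_Iic).mono fun r hr => exp_mul_sub_le_one hκ.le hr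
  have hw := integrableOn_exp_mul_sub_Iic hκ s
  refine ⟨integrable_mul_norm_sq hmeas.restrict hFs hw hw0 hw1, ?_⟩
  have hIs : ∫ t in Iic s, ‖f t - finf‖ ^ 2 ≤ I :=
    setIntegral_mono_set (hF1 τ) (ae_of_all _ fun t => by positivity)
      (Iic_subset_Iic.2 hs).eventuallyLE
  calc ∫ r in Iic s, exp (κ * (r - s)) * ‖f r‖ ^ 2
      ≤ 2 * (∫ t in Iic s, ‖f t - finf‖ ^ 2) + 2 * ‖finf‖ ^ 2 * κ⁻¹ := by
        simpa only [integral_exp_mul_sub_Iic hκ] using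
          integral_mul_norm_sq_le hmeas.restrict hFs hw hw0 hw1
    _ ≤ 2 * I + 2 * ‖finf‖ ^ 2 * κ⁻¹ + 1 := by linarith

theorem backward_uniform_integral_bound {E : Type*} [NormedAddCommGroup E] [NormedSpace ℝ E]
    (f : ℝ → E) (finf : E)
    (hmeas : AEStronglyMeasurable f volume)
    (hloc : ∀ a b : ℝ, IntegrableOn (fun t => ‖f t‖ ^ 2) (Set.Icc a b))
    (hF1 : ∀ τ : ℝ, IntegrableOn (fun t => ‖f t - finf‖ ^ 2) (Set.Iic τ))
    (hF2 : Tendsto (fun τ => ∫ t in Set.Iic τ, ‖f t - finf‖ ^ 2) atBot (nhds 0)) :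
    ∀ κ : ℝ, 0 < κ → ∀ τ : ℝ, ∃ M : ℝ, 0 < M ∧ ∀ s ≤ τ,
      IntegrableOn (fun r => Real.exp (κ * (r - s)) * ‖f r‖ ^ 2) (Set.Iic s) ∧
      ∫ r in Set.Iic s, Real.exp (κ * (r - s)) * ‖f r‖ ^ 2 ≤ M :=
  backward_uniform_integral_bound_general f finf hmeas hF1
end
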